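/- arXiv:2403.04604 — 2 statements merged into one kernel-verified Lean document; each statement's English description precedes it below -/
import Mathlib

section
/- (Converse of Theorem 1) Let d ∈ ℕ, let A be a Hermitian d×d complex matrix, and let ψ : ℝ^d → EuclideanSpace ℂ (Fin d), lam : ℝ^d → ℝ be differentiable with ‖ψ(w)‖ = 1 and (A + diag(w)).mulVec (ψ w) = lam w • ψ w for every w. Fix v ∈ ℝ^d, define E_v(w) = Re ⟪ψ(w), (A + diag(v)).mulVec (ψ w)⟫ and the density map ρ(w)_i = |ψ(w)_i|². Let w₀ ∈ ℝ^d and suppose that every x ∈ ℝ^d that is Euclidean-orthogonal to the range of the linear response map u ↦ fderiv ρ at w₀ applied to u is a real multiple of 𝟙 = (1,…,1). If the Fréchet derivative of E_v at w₀ is zero, then v − w₀ is a constant vector. -/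
/-!
With `H_w = A + diag w` one has `E_v(w) = Re ⟪ψ w, H_{w₀} ψ w⟫ + ⟪v - w₀, ρ w⟫`. The first term
is stationary at `w₀` because `ψ w₀` is an eigenvector of the self-adjoint `H_{w₀}` and `‖ψ w‖`
is constant (Hellmann–Feynman). Hence stationarity of `E_v` at `w₀` says that `v - w₀` is
orthogonal to the range of the density response `dρ(w₀)`, and nondegeneracy makes it constant.
-/

open scoped InnerProductSpace ComplexConjugate
open Filter Topology

section Stationarity

variable {𝕜 E G : Type*} [RCLike 𝕜] [NormedAddCommGroup E] [InnerProductSpace 𝕜 E]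
  [NormedSpace ℝ E] [NormedAddCommGroup G] [NormedSpace ℝ G]
  {f : G → E} {f' : G →L[ℝ] E} {x : G}

theorem HasFDerivAt.inner_add_inner_eq_zero_of_eventually_norm_eq (hf : HasFDerivAt f f' x)
    (hnorm : ∀ᶠ y in 𝓝 x, ‖f y‖ = ‖f x‖) (u : G) :
    ⟪f x, f' u⟫_𝕜 + ⟪f' u, f x⟫_𝕜 = 0 := by
  have hconst : HasFDerivAt (fun y => ⟪f y, f y⟫_𝕜) (0 : G →L[ℝ] 𝕜) x :=
    (hasFDerivAt_const ((‖f x‖ : 𝕜) ^ 2) x).congr_of_eventuallyEq <| hnorm.mono fun y hy => by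
      simp only [inner_self_eq_norm_sq_to_K, hy]
  simpa using congr($((hf.inner 𝕜 hf).unique hconst) u)

theorem HasFDerivAt.inner_apply_self_of_eigenvector [IsScalarTower ℝ 𝕜 E] {T : E →L[𝕜] E}
    (hT : (T : E →ₗ[𝕜] E).IsSymmetric) {μ : ℝ} (heig : T (f x) = (μ : 𝕜) • f x)
    (hf : HasFDerivAt f f' x) (hnorm : ∀ᶠ y in 𝓝 x, ‖f y‖ = ‖f x‖) :
    HasFDerivAt (fun y => ⟪f y, T (f y)⟫_𝕜) (0 : G →L[ℝ] 𝕜) x := by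
  refine (hf.inner 𝕜 ((T.restrictScalars ℝ).hasFDerivAt.comp x hf)).congr_fderiv ?_
  ext u
  calc _ = ⟪f x, T (f' u)⟫_𝕜 + ⟪f' u, T (f x)⟫_𝕜 := rfl
    _ = (μ : 𝕜) * (⟪f x, f' u⟫_𝕜 + ⟪f' u, f x⟫_𝕜) := by
        rw [show ⟪f x, T (f' u)⟫_𝕜 = ⟪T (f x), f' u⟫_𝕜 from (hT _ _).symm, heig,
          inner_smul_left, inner_smul_right, RCLike.conj_ofReal, mul_add]
    _ = 0 := by rw [hf.inner_add_inner_eq_zero_of_eventually_norm_eq hnorm u, mul_zero]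

end Stationarity

section Density

open Matrix WithLp

variable {ι : Type*}

noncomputable def density (z : EuclideanSpace ℂ ι) : EuclideanSpace ℝ ι :=
  toLp 2 fun i => ‖z i‖ ^ 2

theorem Matrix.IsHermitian.add_diagonal_ofReal [DecidableEq ι] {A : Matrix ι ι ℂ}
    (hA : A.IsHermitian) (p : ι → ℝ) : (A + diagonal fun i => (p i : ℂ)).IsHermitian :=
  hA.add (isHermitian_diagonal_of_self_adjoint _ (by ext; simp))

variable [Fintype ι]

theorem differentiable_density : Differentiable ℝ (density : EuclideanSpace ℂ ι → _) :=
  differentiable_euclidean.mpr fun i =>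
    (((EuclideanSpace.proj i : EuclideanSpace ℂ ι →L[ℂ] ℂ).restrictScalars ℝ).differentiable
      |>.norm_sq ℂ :)

theorem re_inner_add_diagonal_mulVec [DecidableEq ι] (A : Matrix ι ι ℂ) (p : EuclideanSpace ℝ ι)
    (z : EuclideanSpace ℂ ι) :
    (⟪z, toLp 2 ((A + diagonal fun i => (p i : ℂ)) *ᵥ z)⟫_ℂ).re
      = (⟪z, toLp 2 (A *ᵥ z)⟫_ℂ).re + ⟪p, density z⟫_ℝ := by
  rw [add_mulVec, toLp_add, inner_add_right, Complex.add_re, add_right_inj]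
  simp only [PiLp.inner_apply, RCLike.inner_apply, mulVec_diagonal, Complex.re_sum, density]
  refine Finset.sum_congr rfl fun i _ => ?_
  rw [mul_assoc, Complex.mul_conj', conj_trivial, ← Complex.ofReal_pow, ← Complex.ofReal_mul,
    Complex.ofReal_re, mul_comm]

theorem re_inner_add_diagonal_mulVec_sub [DecidableEq ι] (A : Matrix ι ι ℂ)
    (p q : EuclideanSpace ℝ ι) (z : EuclideanSpace ℂ ι) :
    (⟪z, toLp 2 ((A + diagonal fun i => (p i : ℂ)) *ᵥ z)⟫_ℂ).re
      = (⟪z, toLp 2 ((A + diagonal fun i => (q i : ℂ)) *ᵥ z)⟫_ℂ).re + ⟪p - q, density z⟫_ℝ := by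
  rw [re_inner_add_diagonal_mulVec A p, re_inner_add_diagonal_mulVec A q, inner_sub_left]
  ring

end Density

theorem potential_functional_stationary_converse_general (d : ℕ) (A : Matrix (Fin d) (Fin d) ℂ)
    (hA : A.IsHermitian)
    (ψ : EuclideanSpace ℝ (Fin d) → EuclideanSpace ℂ (Fin d))
    (lam : EuclideanSpace ℝ (Fin d) → ℝ)
    (hψ : Differentiable ℝ ψ)
    (hnorm : ∀ w, ‖ψ w‖ = 1)
    (heig : ∀ w, (A + Matrix.diagonal fun i => (w i : ℂ)).mulVec (ψ w) = lam w • ψ w)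
    (v w₀ : EuclideanSpace ℝ (Fin d))
    (hnondeg : ∀ x : EuclideanSpace ℝ (Fin d),
      (∀ u : EuclideanSpace ℝ (Fin d),
        (inner ℝ x (fderiv ℝ
          (fun w' => (show EuclideanSpace ℝ (Fin d) from WithLp.toLp 2 fun i => ‖ψ w' i‖ ^ 2)) w₀ u) : ℝ) = 0) →
      ∃ c : ℝ, ∀ i, x i = c)
    (hstat : fderiv ℝ (fun w' => (inner ℂ (ψ w')
        (WithLp.toLp 2 ((A + Matrix.diagonal fun i => (v i : ℂ)).mulVec (ψ w')) :
          EuclideanSpace ℂ (Fin d)) : ℂ).re) w₀ = 0) :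
    ∃ c : ℝ, ∀ i, v i - w₀ i = c := by
  set T := Matrix.toEuclideanCLM (𝕜 := ℂ) (A + Matrix.diagonal fun i => (w₀ i : ℂ))
  have heig₀ : T (ψ w₀) = (lam w₀ : ℂ) • ψ w₀ := by
    apply WithLp.ofLp_injective 2
    rw [WithLp.ofLp_smul, Complex.coe_smul]
    exact heig w₀
  have hT : (T : EuclideanSpace ℂ (Fin d) →ₗ[ℂ] EuclideanSpace ℂ (Fin d)).IsSymmetric := by
    rw [Matrix.coe_toEuclideanCLM_eq_toEuclideanLin, Matrix.isSymmetric_toEuclideanLin_iff]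
    exact hA.add_diagonal_ofReal _
  have hF₀ : HasFDerivAt (fun w => (⟪ψ w, T (ψ w)⟫_ℂ).re) (0 : _ →L[ℝ] ℝ) w₀ := by
    have h := (hψ w₀).hasFDerivAt.inner_apply_self_of_eigenvector hT heig₀
      (.of_forall fun w => by rw [hnorm, hnorm])
    exact (Complex.reCLM.hasFDerivAt.comp w₀ h).congr_fderiv (ContinuousLinearMap.comp_zero _)
  have hρ := (innerSL ℝ (v - w₀)).hasFDerivAt.comp w₀
    ((differentiable_density.comp hψ) w₀).hasFDerivAt
  have hE := (hF₀.add hρ).congr_of_eventuallyEq <| .of_forall fun w =>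
    re_inner_add_diagonal_mulVec_sub A v w₀ (ψ w)
  have hL := hE.fderiv.symm.trans hstat
  refine hnondeg (v - w₀) fun u => ?_
  have hu := congr($hL u)
  simp only [zero_add, ContinuousLinearMap.comp_apply, innerSL_apply_apply, _root_.zero_apply]
    at hu
  exact hu

/-- Converse of Theorem 1: assuming the nondegeneracy condition that the only
vectors orthogonal to the range of the linear density-response map `u ↦ δρ/δw · u`
are the constant vectors, stationarity of `E_v` at `w₀` implies that `v - w₀` is
a constant vector. -/
theorem potential_functional_stationary_converse (d : ℕ) (A : Matrix (Fin d) (Fin d) ℂ)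
    (hA : A.IsHermitian)
    (ψ : EuclideanSpace ℝ (Fin d) → EuclideanSpace ℂ (Fin d))
    (lam : EuclideanSpace ℝ (Fin d) → ℝ)
    (hψ : Differentiable ℝ ψ) (hlam : Differentiable ℝ lam)
    (hnorm : ∀ w, ‖ψ w‖ = 1)
    (heig : ∀ w, (A + Matrix.diagonal fun i => (w i : ℂ)).mulVec (ψ w) = lam w • ψ w)
    (v w₀ : EuclideanSpace ℝ (Fin d))
    (hnondeg : ∀ x : EuclideanSpace ℝ (Fin d),
      (∀ u : EuclideanSpace ℝ (Fin d),
        (inner ℝ x (fderiv ℝ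
          (fun w' => (show EuclideanSpace ℝ (Fin d) from WithLp.toLp 2 fun i => ‖ψ w' i‖ ^ 2)) w₀ u) : ℝ) = 0) →
      ∃ c : ℝ, ∀ i, x i = c)
    (hstat : fderiv ℝ (fun w' => (inner ℂ (ψ w')
        (WithLp.toLp 2 ((A + Matrix.diagonal fun i => (v i : ℂ)).mulVec (ψ w')) :
          EuclideanSpace ℂ (Fin d)) : ℂ).re) w₀ = 0) :
    ∃ c : ℝ, ∀ i, v i - w₀ i = c :=
  potential_functional_stationary_converse_general d A hA ψ lam hψ hnorm heig v w₀ hnondeg hstat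
end

section
/- (Theorem 2, derivative formula) Let d ∈ ℕ, let A be a Hermitian d×d complex matrix, and let ψ : ℝ^d → EuclideanSpace ℂ (Fin d), lam : ℝ^d → ℝ be differentiable with ‖ψ(w)‖ = 1 and (A + diag(w)).mulVec (ψ w) = lam w • ψ w for every w. Let W : ℝ^d → ℝ^d be a differentiable map (the adiabatic-connection map from noninteracting potentials w_s to interacting potentials w = W(w_s)). Fix v ∈ ℝ^d and define E_v : ℝ^d → ℝ by E_v(w_s) = Re ⟪ψ(W(w_s)), (A + diag(v)).mulVec (ψ (W(w_s)))⟫, and ρ∘W : ℝ^d → ℝ^d by (ρ∘W)(w_s)_i = |ψ(W(w_s))_i|². Then for every w_s and every u ∈ ℝ^d, the Fréchet derivative of E_v at w_s applied to u equals Σ_i (v_i − W(w_s)_i) · (fderiv (ρ∘W) at w_s applied to u)_i. -/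
/-!
Write `φ = ψ ∘ W`, `p = φ w_s` and `ẋ = Dφ(w_s) u`. Since `A + diag v` is Hermitian, the
variation of `E_v` is `2 Re ⟪(A + diag v) p, ẋ⟫`. The eigenvalue equation at `w = W w_s` turns
`(A + diag v) p` into `λ p + diag (v - w) p`; the `λ`-term drops out because `‖φ‖ ≡ 1` forces
`Re ⟪p, ẋ⟫ = 0`, and what is left, `∑ i (v i - w i) · 2 Re (p̄ i ẋ i)`, is the variation of the
density `|φ i|²` paired with `v - w`.
-/

open scoped InnerProductSpace

section InnerDerivative

variable {𝕜 E X : Type*} [RCLike 𝕜] [NormedAddCommGroup E] [InnerProductSpace 𝕜 E]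
  [NormedSpace ℝ E] [IsScalarTower ℝ 𝕜 E] [NormedAddCommGroup X] [NormedSpace ℝ X]
  {f : X → E} {x : X}

theorem LinearMap.IsSymmetric.fderiv_re_inner_apply_self_apply {T : E →L[𝕜] E}
    (hT : (T : E →ₗ[𝕜] E).IsSymmetric) (hf : DifferentiableAt ℝ f x) (u : X) :
    fderiv ℝ (fun y => RCLike.re ⟪f y, T (f y)⟫_𝕜) x u =
      2 * RCLike.re ⟪T (f x), fderiv ℝ f x u⟫_𝕜 := by
  have hTf := (T.restrictScalars ℝ).hasFDerivAt.comp x hf.hasFDerivAt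
  have hre : HasFDerivAt (fun y => RCLike.re ⟪f y, T (f y)⟫_𝕜) _ x :=
    RCLike.reCLM.hasFDerivAt.comp x (hf.hasFDerivAt.inner 𝕜 hTf)
  have hsymm := hT (f x) (fderiv ℝ f x u)
  simp only [ContinuousLinearMap.coe_coe] at hsymm
  rw [hre.fderiv]
  simp [hsymm, inner_re_symm (𝕜 := 𝕜) (fderiv ℝ f x u), two_mul]

theorem fderiv_norm_sq_comp_apply (hf : DifferentiableAt ℝ f x) (u : X) :
    fderiv ℝ (fun y => ‖f y‖ ^ 2) x u = 2 * RCLike.re ⟪f x, fderiv ℝ f x u⟫_𝕜 := by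
  simpa [inner_self_eq_norm_sq] using
    LinearMap.IsSymmetric.id.fderiv_re_inner_apply_self_apply (T := ContinuousLinearMap.id 𝕜 E) hf u

theorem re_inner_fderiv_eq_zero_of_norm_eq_const {c : ℝ} (hnorm : ∀ y, ‖f y‖ = c)
    (hf : DifferentiableAt ℝ f x) (u : X) :
    RCLike.re ⟪f x, fderiv ℝ f x u⟫_𝕜 = 0 := by
  simpa [hnorm] using fderiv_norm_sq_comp_apply (𝕜 := 𝕜) hf u

end InnerDerivative

section PiLp

variable {𝕜 X ι : Type*} {β : ι → Type*} [NontriviallyNormedField 𝕜] [NormedAddCommGroup X]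
  [NormedSpace 𝕜 X] [Fintype ι] [∀ i, NormedAddCommGroup (β i)] [∀ i, NormedSpace 𝕜 (β i)]
  {p : ENNReal} [Fact (1 ≤ p)]

theorem fderiv_piLp_apply {g : X → PiLp p β} {x : X} (hg : DifferentiableAt 𝕜 g x) (u : X)
    (i : ι) : fderiv 𝕜 (fun y => g y i) x u = fderiv 𝕜 g x u i := by
  have h : HasFDerivAt (fun y => g y i) _ x :=
    (PiLp.proj p (𝕜 := 𝕜) β i).hasFDerivAt.comp x hg.hasFDerivAt
  rw [h.fderiv]
  rfl

end PiLp

section Matrix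

open Matrix

variable {𝕜 ι : Type*} [RCLike 𝕜] [Fintype ι] [DecidableEq ι]

theorem Matrix.IsHermitian.fderiv_re_inner_mulVec_self_apply {X : Type*} [NormedAddCommGroup X]
    [NormedSpace ℝ X] {A : Matrix ι ι 𝕜} (hA : A.IsHermitian) {f : X → EuclideanSpace 𝕜 ι} {x : X}
    (hf : DifferentiableAt ℝ f x) (u : X) :
    fderiv ℝ (fun y => RCLike.re ⟪f y, WithLp.toLp 2 (A *ᵥ f y)⟫_𝕜) x u =
      2 * RCLike.re ⟪WithLp.toLp 2 (A *ᵥ f x), fderiv ℝ f x u⟫_𝕜 := by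
  have hT :
      (toEuclideanCLM (𝕜 := 𝕜) A : EuclideanSpace 𝕜 ι →ₗ[𝕜] EuclideanSpace 𝕜 ι).IsSymmetric := by
    rwa [coe_toEuclideanCLM_eq_toEuclideanLin, isSymmetric_toEuclideanLin_iff]
  simpa only [← ofLp_toEuclideanCLM, WithLp.toLp_ofLp] using
    hT.fderiv_re_inner_apply_self_apply hf u

theorem mulVec_add_diagonal_of_mulVec_eq_smul {A : Matrix ι ι 𝕜} {w : ι → ℝ} {μ : ℝ}
    {p : ι → 𝕜} (hp : (A + diagonal fun i => (w i : 𝕜)) *ᵥ p = μ • p) (v : ι → ℝ) (i : ι) :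
    ((A + diagonal fun i => (v i : 𝕜)) *ᵥ p) i = ((μ + (v i - w i) : ℝ) : 𝕜) • p i := by
  have h := congrFun hp i
  simp only [add_mulVec, Pi.add_apply, mulVec_diagonal, Pi.smul_apply,
    RCLike.real_smul_eq_coe_mul] at h ⊢
  push_cast
  linear_combination h

theorem re_inner_mulVec_add_diagonal_of_mulVec_eq_smul {A : Matrix ι ι 𝕜} {w : ι → ℝ} {μ : ℝ}
    {p : EuclideanSpace 𝕜 ι} (hp : (A + diagonal fun i => (w i : 𝕜)) *ᵥ p = μ • p) (v : ι → ℝ)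
    {y : EuclideanSpace 𝕜 ι} (hy : RCLike.re ⟪p, y⟫_𝕜 = 0) :
    RCLike.re ⟪WithLp.toLp 2 ((A + diagonal fun i => (v i : 𝕜)) *ᵥ p), y⟫_𝕜 =
      ∑ i, (v i - w i) * RCLike.re ⟪p i, y i⟫_𝕜 := by
  rw [PiLp.inner_apply, map_sum] at hy
  simp only [PiLp.inner_apply, map_sum, mulVec_add_diagonal_of_mulVec_eq_smul hp,
    inner_smul_real_left, RCLike.smul_re, add_mul, Finset.sum_add_distrib, ← Finset.mul_sum, hy]
  ring

end Matrix

theorem ks_potential_functional_variation_general (d : ℕ) (A : Matrix (Fin d) (Fin d) ℂ)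
    (hA : A.IsHermitian)
    (ψ : EuclideanSpace ℝ (Fin d) → EuclideanSpace ℂ (Fin d))
    (lam : EuclideanSpace ℝ (Fin d) → ℝ)
    (hψ : Differentiable ℝ ψ)
    (hnorm : ∀ w, ‖ψ w‖ = 1)
    (heig : ∀ w, (A + Matrix.diagonal fun i => (w i : ℂ)).mulVec (ψ w) = lam w • ψ w)
    (W : EuclideanSpace ℝ (Fin d) → EuclideanSpace ℝ (Fin d))
    (hW : Differentiable ℝ W)
    (v : EuclideanSpace ℝ (Fin d)) (ws u : EuclideanSpace ℝ (Fin d)) :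
    fderiv ℝ (fun ws' => (inner ℂ (ψ (W ws'))
        (WithLp.toLp 2 ((A + Matrix.diagonal fun i => (v i : ℂ)).mulVec (ψ (W ws'))) :
          EuclideanSpace ℂ (Fin d)) : ℂ).re) ws u =
      ∑ i, (v i - W ws i) *
        fderiv ℝ (fun ws' =>
          (show EuclideanSpace ℝ (Fin d) from WithLp.toLp 2 fun i => ‖ψ (W ws') i‖ ^ 2)) ws u i := by
  have hφ : Differentiable ℝ fun t => ψ (W t) := hψ.comp hW
  have hφi (i : Fin d) : DifferentiableAt ℝ (fun t => ψ (W t) i) ws :=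
    (differentiableAt_piLp 2).1 (hφ ws) i
  have hρ : DifferentiableAt ℝ (fun t => (show EuclideanSpace ℝ (Fin d) from
      WithLp.toLp 2 fun i => ‖ψ (W t) i‖ ^ 2)) ws :=
    (differentiableAt_piLp 2).2 fun i => (hφi i).norm_sq ℂ
  have hM : (A + Matrix.diagonal fun i => (v i : ℂ)).IsHermitian :=
    hA.add (Matrix.isHermitian_diagonal_iff.2 fun i => RCLike.conj_ofReal _)
  have hdensity (i : Fin d) : fderiv ℝ (fun t => (show EuclideanSpace ℝ (Fin d) from
      WithLp.toLp 2 fun i => ‖ψ (W t) i‖ ^ 2)) ws u i =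
      2 * RCLike.re ⟪ψ (W ws) i, fderiv ℝ (fun t => ψ (W t)) ws u i⟫_ℂ := by
    rw [← fderiv_piLp_apply hρ, ← fderiv_piLp_apply (hφ ws)]
    exact fderiv_norm_sq_comp_apply (hφi i) u
  have horth := re_inner_fderiv_eq_zero_of_norm_eq_const (𝕜 := ℂ) (fun t => hnorm (W t)) (hφ ws) u
  refine (hM.fderiv_re_inner_mulVec_self_apply (hφ ws) u).trans ?_
  -- not `rw`: the statement reaches the matrix `+` on `ℂ` through a different instance path
  refine (congrArg (2 * ·)
    (re_inner_mulVec_add_diagonal_of_mulVec_eq_smul (heig (W ws)) v horth)).trans ?_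
  rw [Finset.mul_sum]
  refine Finset.sum_congr rfl fun i _ => ?_
  rw [hdensity i]
  ring

/-- Theorem 2 of the paper, derivative formula: for the excited-state Kohn–Sham
functional `E_v(w_s) = Re ⟪ψ(W(w_s)), (A + diag v) ψ(W(w_s))⟫`, expressed through
the adiabatic-connection map `W`, the first-order variation in direction `u`
equals `∑ i (v i - W(w_s) i) * (δ(ρ∘W)/δw_s · u) i`. -/
theorem ks_potential_functional_variation (d : ℕ) (A : Matrix (Fin d) (Fin d) ℂ)
    (hA : A.IsHermitian)
    (ψ : EuclideanSpace ℝ (Fin d) → EuclideanSpace ℂ (Fin d))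
    (lam : EuclideanSpace ℝ (Fin d) → ℝ)
    (hψ : Differentiable ℝ ψ) (hlam : Differentiable ℝ lam)
    (hnorm : ∀ w, ‖ψ w‖ = 1)
    (heig : ∀ w, (A + Matrix.diagonal fun i => (w i : ℂ)).mulVec (ψ w) = lam w • ψ w)
    (W : EuclideanSpace ℝ (Fin d) → EuclideanSpace ℝ (Fin d))
    (hW : Differentiable ℝ W)
    (v : EuclideanSpace ℝ (Fin d)) (ws u : EuclideanSpace ℝ (Fin d)) :
    fderiv ℝ (fun ws' => (inner ℂ (ψ (W ws'))
        (WithLp.toLp 2 ((A + Matrix.diagonal fun i => (v i : ℂ)).mulVec (ψ (W ws'))) :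
          EuclideanSpace ℂ (Fin d)) : ℂ).re) ws u =
      ∑ i, (v i - W ws i) *
        fderiv ℝ (fun ws' =>
          (show EuclideanSpace ℝ (Fin d) from WithLp.toLp 2 fun i => ‖ψ (W ws') i‖ ^ 2)) ws u i :=
  ks_potential_functional_variation_general d A hA ψ lam hψ hnorm heig W hW v ws u
end
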